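/- arXiv:2109.01656 — 3 statements merged into one kernel-verified Lean document; each statement's English description precedes it below -/
import Mathlib

section
/- Let a, b, c, d be positive reals with a + b = c + d and a ≥ c. Then the Beta(a, b) distribution stochastically dominates the Beta(c, d) distribution: for all x ∈ [0,1], the CDF satisfies F_{Beta(a,b)}(x) ≤ F_{Beta(c,d)}(x). -/
/-!
The density of `Beta(a, b)` is that of `Beta(c, d)` times `(t / (1 - t)) ^ (a - c)`, a
nondecreasing function of `t` when `a + b = c + d` and `c ≤ a` (monotone likelihood ratio).
So for the two densities `f`, `g` we have `f s * g t ≤ f t * g s` whenever `s ≤ x < t`, and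
integrating over `s ≤ x < t` gives `F(x) * (1 - G(x)) ≤ G(x) * (1 - F(x))` for the two CDFs,
i.e. `F(x) ≤ G(x)`.
-/

open MeasureTheory

/-- CDF of the Beta distribution with parameters `a, b > 0`. -/
noncomputable def betaCDF (a b x : ℝ) : ℝ :=
  (∫ t in Set.Ioc (0:ℝ) x, t ^ (a - 1) * (1 - t) ^ (b - 1)) /
    (∫ t in Set.Ioc (0:ℝ) 1, t ^ (a - 1) * (1 - t) ^ (b - 1))

open Set

theorem setIntegral_mul_setIntegral_le_of_cross {α : Type*} [MeasurableSpace α]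
    {μ : Measure α} {f g : α → ℝ} {I J : Set α} (hI : MeasurableSet I) (hJ : MeasurableSet J)
    (hfI : IntegrableOn f I μ) (hgI : IntegrableOn g I μ)
    (hfJ : IntegrableOn f J μ) (hgJ : IntegrableOn g J μ)
    (hcross : ∀ s ∈ I, ∀ t ∈ J, f s * g t ≤ f t * g s) :
    (∫ s in I, f s ∂μ) * (∫ t in J, g t ∂μ) ≤ (∫ s in I, g s ∂μ) * ∫ t in J, f t ∂μ := by
  calc (∫ s in I, f s ∂μ) * (∫ t in J, g t ∂μ)
      = ∫ s in I, ∫ t in J, f s * g t ∂μ ∂μ := by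
        simp only [integral_const_mul, integral_mul_const]
    _ ≤ ∫ s in I, ∫ t in J, f t * g s ∂μ ∂μ := by
        refine setIntegral_mono_on ?_ ?_ hI fun s hs ↦
          setIntegral_mono_on (hgJ.const_mul _) (hfJ.mul_const _) hJ (hcross s hs)
        · simp only [integral_const_mul]
          exact hfI.mul_const _
        · simp only [integral_mul_const]
          exact hgI.const_mul _
    _ = (∫ s in I, g s ∂μ) * ∫ t in J, f t ∂μ := by
        simp only [integral_mul_const, mul_comm]

theorem setIntegral_Ioc_add_setIntegral_Ioc {μ : Measure ℝ} {f : ℝ → ℝ} {p x q : ℝ}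
    (hpx : p ≤ x) (hxq : x ≤ q) (hf : IntegrableOn f (Ioc p q) μ) :
    ∫ t in Ioc p x, f t ∂μ + ∫ t in Ioc x q, f t ∂μ = ∫ t in Ioc p q, f t ∂μ := by
  rw [← setIntegral_union (Ioc_disjoint_Ioc_of_le le_rfl) measurableSet_Ioc
    (hf.mono_set (Ioc_subset_Ioc_right hxq)) (hf.mono_set (Ioc_subset_Ioc_left hpx)),
    Ioc_union_Ioc_eq_Ioc hpx hxq]

/-- Monotone likelihood ratio implies stochastic dominance. The point `t = q` is excluded from
`hcross` because `rpow` densities take junk values at the endpoints (`0 ^ 0 = 1`). -/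
theorem setIntegral_Ioc_div_le_of_cross {μ : Measure ℝ} [NullSingletonClass μ] {f g : ℝ → ℝ}
    {p x q : ℝ} (hpx : p ≤ x) (hxq : x ≤ q)
    (hf : IntegrableOn f (Ioc p q) μ) (hg : IntegrableOn g (Ioc p q) μ)
    (hf_pos : 0 < ∫ t in Ioc p q, f t ∂μ) (hg_pos : 0 < ∫ t in Ioc p q, g t ∂μ)
    (hcross : ∀ s ∈ Ioc p x, ∀ t ∈ Ioo x q, f s * g t ≤ f t * g s) :
    (∫ t in Ioc p x, f t ∂μ) / (∫ t in Ioc p q, f t ∂μ)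
      ≤ (∫ t in Ioc p x, g t ∂μ) / ∫ t in Ioc p q, g t ∂μ := by
  have hleft : Ioc p x ⊆ Ioc p q := Ioc_subset_Ioc_right hxq
  have hright : Ioo x q ⊆ Ioc p q := Ioo_subset_Ioc_self.trans (Ioc_subset_Ioc_left hpx)
  have key := setIntegral_mul_setIntegral_le_of_cross measurableSet_Ioc measurableSet_Ioo
    (hf.mono_set hleft) (hg.mono_set hleft) (hf.mono_set hright) (hg.mono_set hright) hcross
  rw [← integral_Ioc_eq_integral_Ioo, ← integral_Ioc_eq_integral_Ioo] at key
  rw [div_le_div_iff₀ hf_pos hg_pos, ← setIntegral_Ioc_add_setIntegral_Ioc hpx hxq hf,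
    ← setIntegral_Ioc_add_setIntegral_Ioc hpx hxq hg]
  linear_combination key

noncomputable def betaDensity (a b t : ℝ) : ℝ :=
  t ^ (a - 1) * (1 - t) ^ (b - 1)

theorem betaCDF_eq (a b x : ℝ) :
    betaCDF a b x
      = (∫ t in Ioc 0 x, betaDensity a b t) / ∫ t in Ioc 0 1, betaDensity a b t :=
  rfl

theorem integrableOn_betaDensity {a b : ℝ} (ha : 0 < a) (hb : 0 < b) :
    IntegrableOn (betaDensity a b) (Ioc 0 1) := by
  have h := (Complex.betaIntegral_convergent (u := a) (v := b)
    (by simpa using ha) (by simpa using hb)).norm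
  rw [intervalIntegrable_iff_integrableOn_Ioo_of_le zero_le_one] at h
  rw [integrableOn_Ioc_iff_integrableOn_Ioo]
  refine h.congr_fun (fun t ht ↦ ?_) measurableSet_Ioo
  have h1t : 0 < 1 - t := sub_pos.2 ht.2
  dsimp only
  rw [norm_mul, show (1 : ℂ) - t = ((1 - t : ℝ) : ℂ) by push_cast; ring,
    Complex.norm_cpow_eq_rpow_re_of_pos ht.1, Complex.norm_cpow_eq_rpow_re_of_pos h1t]
  simp [betaDensity]

theorem betaDensity_pos {a b t : ℝ} (ht : t ∈ Ioo 0 1) : 0 < betaDensity a b t :=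
  mul_pos (Real.rpow_pos_of_pos ht.1 _) (Real.rpow_pos_of_pos (sub_pos.2 ht.2) _)

theorem setIntegral_betaDensity_pos {a b : ℝ} (ha : 0 < a) (hb : 0 < b) :
    0 < ∫ t in Ioc 0 1, betaDensity a b t := by
  rw [← intervalIntegral.integral_of_le zero_le_one]
  refine intervalIntegral.intervalIntegral_pos_of_pos_on ?_ (fun t ht ↦ betaDensity_pos ht)
    zero_lt_one
  exact (intervalIntegrable_iff_integrableOn_Ioc_of_le zero_le_one).2
    (integrableOn_betaDensity ha hb)

theorem betaDensity_eq_mul_rpow {a b c d t : ℝ} (hsum : a + b = c + d) (ht : t ∈ Ioo 0 1) :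
    betaDensity a b t = betaDensity c d t * (t / (1 - t)) ^ (a - c) := by
  have h1t : 0 < 1 - t := sub_pos.2 ht.2
  rw [betaDensity, betaDensity, Real.div_rpow ht.1.le h1t.le, div_eq_mul_inv,
    ← Real.rpow_neg h1t.le, mul_mul_mul_comm, ← Real.rpow_add ht.1, ← Real.rpow_add h1t]
  congr 2 <;> linarith

theorem div_one_sub_rpow_le {e s t : ℝ} (he : 0 ≤ e) (hs : 0 ≤ s) (hst : s ≤ t) (ht : t < 1) :
    (s / (1 - s)) ^ e ≤ (t / (1 - t)) ^ e :=
  Real.rpow_le_rpow (div_nonneg hs (by linarith)) (div_le_div₀ (hs.trans hst) hst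
    (sub_pos.2 ht) (by linarith)) he

theorem betaDensity_cross {a b c d s t : ℝ} (hsum : a + b = c + d) (hca : c ≤ a)
    (hs : s ∈ Ioo 0 1) (ht : t ∈ Ioo 0 1) (hst : s ≤ t) :
    betaDensity a b s * betaDensity c d t ≤ betaDensity a b t * betaDensity c d s := by
  rw [betaDensity_eq_mul_rpow hsum hs, betaDensity_eq_mul_rpow hsum ht,
    mul_right_comm, mul_right_comm (betaDensity c d t), mul_comm (betaDensity c d t)]
  exact mul_le_mul_of_nonneg_left (div_one_sub_rpow_le (sub_nonneg.2 hca) hs.1.le hst ht.2)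
    (mul_pos (betaDensity_pos hs) (betaDensity_pos ht)).le

/-- If `a + b = c + d` and `a ≥ c` then `Beta(a, b)` stochastically dominates
`Beta(c, d)`. -/
theorem betaCDF_stochastic_dominance (a b c d : ℝ)
    (ha : 0 < a) (hb : 0 < b) (hc : 0 < c) (hd : 0 < d)
    (hsum : a + b = c + d) (hac : c ≤ a) :
    ∀ x : ℝ, x ∈ Set.Icc (0:ℝ) 1 → betaCDF a b x ≤ betaCDF c d x := by
  rintro x ⟨hx0, hx1⟩
  rw [betaCDF_eq, betaCDF_eq]
  refine setIntegral_Ioc_div_le_of_cross hx0 hx1 (integrableOn_betaDensity ha hb)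
    (integrableOn_betaDensity hc hd) (setIntegral_betaDensity_pos ha hb)
    (setIntegral_betaDensity_pos hc hd) fun s hs t ht ↦ ?_
  have hxt : s < t := hs.2.trans_lt ht.1
  exact betaDensity_cross hsum hac ⟨hs.1, hxt.trans ht.2⟩ ⟨hs.1.trans hxt, ht.2⟩ hxt.le
end

section
/- For integers a ≥ 1, b ≥ 1 and x ∈ [0,1], the Beta CDF satisfies F_{Beta(a,b)}(x) = 1 − F_{Binomial(a+b−1, x)}(a−1), i.e., the probability that a Beta(a,b) random variable is at most x equals the probability that a Binomial(a+b−1, x) random variable is at least a. -/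
/-!
Write `a = p + 1`, `b = q + 1` and `n = p + q`. The Beta density `t ^ p * (1 - t) ^ q` is a constant
multiple of the Bernstein polynomial `B n p`, and by telescoping the derivative formula for Bernstein
polynomials, `(n + 1) * B n p` is the derivative of the binomial tail `∑_{j > p} B (n + 1) j`.
So the Beta CDF is that tail divided by its value at `x = 1`, which is `1`.
-/

open MeasureTheory

/-- CDF of the Binomial distribution with `n` trials and success probability `p`. -/
noncomputable def binomCDF (n : ℕ) (p : ℝ) (k : ℕ) : ℝ :=
  ∑ i ∈ Finset.range (k + 1), (n.choose i : ℝ) * p ^ i * (1 - p) ^ (n - i)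

open Polynomial Finset

namespace bernsteinPolynomial

theorem derivative_sum_Ico_succ {R : Type*} [CommRing R] {n k : ℕ} (hk : k ≤ n + 1) :
    derivative (∑ ν ∈ Ico k (n + 1), bernsteinPolynomial R (n + 1) (ν + 1)) =
      (n + 1) * bernsteinPolynomial R n k := by
  have telescope : ∑ ν ∈ Ico k (n + 1),
      (bernsteinPolynomial R n ν - bernsteinPolynomial R n (ν + 1)) = bernsteinPolynomial R n k := by
    calc _ = ∑ ν ∈ Ico k (n + 1),
            (-bernsteinPolynomial R n (ν + 1) - -bernsteinPolynomial R n ν) := by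
          simp only [neg_sub_neg]
      _ = bernsteinPolynomial R n k := by
          rw [sum_Ico_sub (fun ν => -bernsteinPolynomial R n ν) hk]
          simp [eq_zero_of_lt R n.lt_succ_self]
  simp only [derivative_sum, derivative_succ_aux, ← mul_sum, telescope]

theorem succ_mul_integral_eval {n k : ℕ} (hk : k ≤ n + 1) (x : ℝ) :
    (n + 1) * ∫ t in (0:ℝ)..x, (bernsteinPolynomial ℝ n k).eval t =
      ∑ ν ∈ Ico k (n + 1), (bernsteinPolynomial ℝ (n + 1) (ν + 1)).eval x := by
  let P := ∑ ν ∈ Ico k (n + 1), bernsteinPolynomial ℝ (n + 1) (ν + 1)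
  have hP0 : P.eval 0 = 0 := by simp [P, eval_finsetSum, eval_at_0]
  have hderiv (t : ℝ) : HasDerivAt P.eval ((n + 1) * (bernsteinPolynomial ℝ n k).eval t) t := by
    simpa [P, derivative_sum_Ico_succ hk] using P.hasDerivAt t
  rw [← intervalIntegral.integral_const_mul, intervalIntegral.integral_eq_sub_of_hasDerivAt
    (fun t _ => hderiv t) ((by fun_prop : Continuous _).intervalIntegrable _ _), hP0, sub_zero,
    eval_finsetSum]

theorem sum_Ico_eval_one {n k : ℕ} (hk : k ≤ n) :
    ∑ ν ∈ Ico k (n + 1), (bernsteinPolynomial ℝ (n + 1) (ν + 1)).eval 1 = 1 := by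
  simp [eval_at_1, hk]

theorem sum_Ico_eval_eq_one_sub_binomCDF {n k : ℕ} (hk : k ≤ n + 1) (x : ℝ) :
    ∑ ν ∈ Ico k (n + 1), (bernsteinPolynomial ℝ (n + 1) (ν + 1)).eval x =
      1 - binomCDF (n + 1) x k := by
  have hsum := congrArg (eval x) (bernsteinPolynomial.sum ℝ (n + 1))
  rw [eval_finsetSum, eval_one, ← sum_range_add_sum_Ico _ (by omega : k + 1 ≤ n + 1 + 1)] at hsum
  rw [← hsum, binomCDF, sum_Ico_add' (fun ν => (bernsteinPolynomial ℝ (n + 1) ν).eval x)]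
  simp [bernsteinPolynomial]

end bernsteinPolynomial

theorem betaCDF_natCast_succ (p q : ℕ) {x : ℝ} (hx : 0 ≤ x) :
    betaCDF ((p + 1 : ℕ) : ℝ) ((q + 1 : ℕ) : ℝ) x =
      (∫ t in (0:ℝ)..x, (bernsteinPolynomial ℝ (p + q) p).eval t) /
        ∫ t in (0:ℝ)..1, (bernsteinPolynomial ℝ (p + q) p).eval t := by
  have hC : ((p + q).choose p : ℝ) ≠ 0 := Nat.cast_ne_zero.mpr (Nat.choose_pos (by omega)).ne'
  have hdensity (t : ℝ) : (bernsteinPolynomial ℝ (p + q) p).eval t =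
      (p + q).choose p * (t ^ ((p + 1 : ℕ) - 1 : ℝ) * (1 - t) ^ ((q + 1 : ℕ) - 1 : ℝ)) := by
    simp [bernsteinPolynomial, mul_assoc]
  simp only [hdensity, intervalIntegral.integral_of_le hx,
    intervalIntegral.integral_of_le zero_le_one, integral_const_mul]
  exact (mul_div_mul_left _ _ hC).symm

/-- The Beta–Binomial identity: for integer parameters `a, b ≥ 1`,
`F_{Beta(a,b)}(x) = 1 − F_{Binomial(a+b−1, x)}(a−1)`. -/
theorem betaCDF_eq_one_sub_binomCDF (a b : ℕ) (ha : 1 ≤ a) (hb : 1 ≤ b)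
    (x : ℝ) (hx : x ∈ Set.Icc (0:ℝ) 1) :
    betaCDF (a : ℝ) (b : ℝ) x = 1 - binomCDF (a + b - 1) x (a - 1) := by
  obtain ⟨p, rfl⟩ : ∃ p, a = p + 1 := ⟨a - 1, by omega⟩
  obtain ⟨q, rfl⟩ : ∃ q, b = q + 1 := ⟨b - 1, by omega⟩
  have hn : p + 1 + (q + 1) - 1 = p + q + 1 := by omega
  have hNe : ((p + q : ℕ) : ℝ) + 1 ≠ 0 := by positivity
  rw [betaCDF_natCast_succ p q hx.1, ← mul_div_mul_left _ _ hNe,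
    bernsteinPolynomial.succ_mul_integral_eval (by omega),
    bernsteinPolynomial.succ_mul_integral_eval (by omega),
    bernsteinPolynomial.sum_Ico_eval_one (by omega), div_one,
    bernsteinPolynomial.sum_Ico_eval_eq_one_sub_binomCDF (by omega), hn, Nat.add_sub_cancel]
end

section
/- Let S, S', F, F' be nonnegative-integer-valued random variables on a common probability space with S' ≤ S pointwise, F ≤ F' pointwise, and S + F = S' + F' pointwise. Then for every x ∈ [0,1], E[F_{Beta(1+S', 1+F')}(x)] ≥ E[F_{Beta(1+S, 1+F)}(x)]; i.e., the Beta mixture with counts (S, F) stochastically dominates the mixture with counts (S', F'). -/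
/-!
For natural parameters, `betaCDF (1 + s) (1 + f) x = I s f x / I s f 1` with
`I s f x = ∫₀ˣ tˢ (1 - t)ᶠ dt`. Differentiating `x ^ (s + 1) * (1 - x) ^ (f + 1)` gives
`(s + 1) I s (f + 1) x - (f + 1) I (s + 1) f x = x ^ (s + 1) (1 - x) ^ (f + 1)`, which is
nonnegative on `[0, 1]` and vanishes at `x = 1`. Hence turning one success into a failure can
only raise the CDF; iterating this compares the integrands pointwise, and integrating finishes.
-/

open MeasureTheory

/-- The unnormalised incomplete Beta function `B(x; s + 1, f + 1)`, indexed by its exponents. -/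
noncomputable def incBeta (s f : ℕ) (x : ℝ) : ℝ :=
  ∫ t in (0 : ℝ)..x, t ^ s * (1 - t) ^ f

namespace incBeta

lemma continuous_integrand (s f : ℕ) : Continuous fun t : ℝ => t ^ s * (1 - t) ^ f := by
  fun_prop

lemma integrand_nonneg (s f : ℕ) {t : ℝ} (ht : t ∈ Set.Icc (0 : ℝ) 1) :
    0 ≤ t ^ s * (1 - t) ^ f :=
  mul_nonneg (pow_nonneg ht.1 s) (pow_nonneg (sub_nonneg.2 ht.2) f)

lemma nonneg (s f : ℕ) {x : ℝ} (hx0 : 0 ≤ x) (hx1 : x ≤ 1) : 0 ≤ incBeta s f x :=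
  intervalIntegral.integral_nonneg hx0 fun _ ht => integrand_nonneg s f ⟨ht.1, ht.2.trans hx1⟩

lemma monotoneOn (s f : ℕ) : MonotoneOn (incBeta s f) (Set.Icc 0 1) := fun _ ha b hb hab =>
  intervalIntegral.integral_mono_interval le_rfl ha.1 hab
    ((ae_restrict_iff' measurableSet_Ioc).2 <| .of_forall fun _ ht =>
      integrand_nonneg s f ⟨ht.1.le, ht.2.trans hb.2⟩)
    ((continuous_integrand s f).intervalIntegrable 0 b)

lemma one_pos (s f : ℕ) : 0 < incBeta s f 1 :=
  intervalIntegral.intervalIntegral_pos_of_pos_on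
    ((continuous_integrand s f).intervalIntegrable 0 1)
    (fun _ ht => mul_pos (pow_pos ht.1 s) (pow_pos (sub_pos.2 ht.2) f)) zero_lt_one

lemma succ_mul_sub_succ_mul (s f : ℕ) (x : ℝ) :
    (s + 1) * incBeta s (f + 1) x - (f + 1) * incBeta (s + 1) f x
      = x ^ (s + 1) * (1 - x) ^ (f + 1) := by
  have hderiv : ∀ t ∈ Set.uIcc (0 : ℝ) x,
      HasDerivAt (fun u : ℝ => u ^ (s + 1) * (1 - u) ^ (f + 1))
        ((s + 1) * (t ^ s * (1 - t) ^ (f + 1)) - (f + 1) * (t ^ (s + 1) * (1 - t) ^ f)) t := by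
    intro t _
    refine ((hasDerivAt_pow (s + 1) t).fun_mul
      (((hasDerivAt_id' t).const_sub 1).fun_pow (f + 1))).congr_deriv ?_
    simp only [Nat.add_sub_cancel]
    push_cast
    ring
  have hint (a b : ℕ) := (continuous_integrand a b).intervalIntegrable (μ := volume) 0 x
  have hftc := intervalIntegral.integral_eq_sub_of_hasDerivAt hderiv
    (((hint s (f + 1)).const_mul _).sub ((hint (s + 1) f).const_mul _))
  rw [intervalIntegral.integral_sub ((hint s (f + 1)).const_mul _) ((hint (s + 1) f).const_mul _),
    intervalIntegral.integral_const_mul, intervalIntegral.integral_const_mul] at hftc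
  simpa [incBeta] using hftc

end incBeta

lemma betaCDF_natCast (s f : ℕ) {x : ℝ} (hx : 0 ≤ x) :
    betaCDF (1 + s) (1 + f) x = incBeta s f x / incBeta s f 1 := by
  simp only [betaCDF, incBeta, add_sub_cancel_left, Real.rpow_natCast,
    intervalIntegral.integral_of_le hx, intervalIntegral.integral_of_le zero_le_one]

lemma betaCDF_natCast_mem_Icc (s f : ℕ) {x : ℝ} (hx0 : 0 ≤ x) (hx1 : x ≤ 1) :
    betaCDF (1 + s) (1 + f) x ∈ Set.Icc (0 : ℝ) 1 := by
  rw [betaCDF_natCast s f hx0]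
  exact ⟨div_nonneg (incBeta.nonneg s f hx0 hx1) (incBeta.one_pos s f).le,
    div_le_one_of_le₀ (incBeta.monotoneOn s f ⟨hx0, hx1⟩ ⟨zero_le_one, le_rfl⟩ hx1) (incBeta.one_pos s f).le⟩

lemma betaCDF_succ_le (s f : ℕ) {x : ℝ} (hx0 : 0 ≤ x) (hx1 : x ≤ 1) :
    betaCDF (1 + (s + 1 : ℕ)) (1 + f) x ≤ betaCDF (1 + s) (1 + (f + 1 : ℕ)) x := by
  rw [betaCDF_natCast _ _ hx0, betaCDF_natCast _ _ hx0]
  have hbound := incBeta.succ_mul_sub_succ_mul s f x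
  have htotal := incBeta.succ_mul_sub_succ_mul s f 1
  norm_num at htotal
  have hrem : 0 ≤ x ^ (s + 1) * (1 - x) ^ (f + 1) := incBeta.integrand_nonneg _ _ ⟨hx0, hx1⟩
  have hD := incBeta.one_pos s (f + 1)
  have hs : (0 : ℝ) < s + 1 := by positivity
  have hf : (0 : ℝ) < f + 1 := by positivity
  calc incBeta (s + 1) f x / incBeta (s + 1) f 1
      = (f + 1) * incBeta (s + 1) f x / ((s + 1) * incBeta s (f + 1) 1) := by
        rw [sub_eq_zero.1 htotal, mul_div_mul_left _ _ hf.ne']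
    _ ≤ (s + 1) * incBeta s (f + 1) x / ((s + 1) * incBeta s (f + 1) 1) :=
        div_le_div_of_nonneg_right (by linarith) (by positivity)
    _ = incBeta s (f + 1) x / incBeta s (f + 1) 1 := mul_div_mul_left _ _ hs.ne'

lemma betaCDF_add_le (d s f : ℕ) {x : ℝ} (hx0 : 0 ≤ x) (hx1 : x ≤ 1) :
    betaCDF (1 + (s + d : ℕ)) (1 + f) x ≤ betaCDF (1 + s) (1 + (f + d : ℕ)) x := by
  induction d generalizing f with
  | zero => rfl
  | succ d ih =>
    calc betaCDF (1 + (s + (d + 1) : ℕ)) (1 + f) x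
        ≤ betaCDF (1 + (s + d : ℕ)) (1 + (f + 1 : ℕ)) x := betaCDF_succ_le (s + d) f hx0 hx1
      _ ≤ betaCDF (1 + s) (1 + (f + (d + 1) : ℕ)) x := by
        simpa only [Nat.add_right_comm f 1 d, add_assoc] using ih (f + 1)

lemma betaCDF_le_of_le {s f s' f' : ℕ} (hs : s' ≤ s) (htot : s + f = s' + f') {x : ℝ}
    (hx0 : 0 ≤ x) (hx1 : x ≤ 1) :
    betaCDF (1 + s) (1 + f) x ≤ betaCDF (1 + s') (1 + f') x := by
  obtain ⟨d, rfl⟩ := Nat.exists_eq_add_of_le hs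
  obtain rfl : f' = f + d := by omega
  exact_mod_cast betaCDF_add_le d s' f hx0 hx1

lemma integrable_betaCDF_natCast {Ω : Type*} [MeasurableSpace Ω] (P : Measure Ω)
    [IsFiniteMeasure P] {S F : Ω → ℕ} (hS : Measurable S) (hF : Measurable F)
    {x : ℝ} (hx0 : 0 ≤ x) (hx1 : x ≤ 1) :
    Integrable (fun ω => betaCDF (1 + S ω) (1 + F ω) x) P :=
  Integrable.of_mem_Icc 0 1
    ((measurable_of_countable fun p : ℕ × ℕ => betaCDF (1 + p.1) (1 + p.2) x).comp
      (hS.prodMk hF)).aemeasurable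
    (.of_forall fun ω => betaCDF_natCast_mem_Icc (S ω) (F ω) hx0 hx1)

theorem beta_mixture_dominance_general {Ω : Type*} [MeasurableSpace Ω]
    (P : Measure Ω) [IsProbabilityMeasure P]
    (S S' F F' : Ω → ℕ)
    (hS : Measurable S) (hS' : Measurable S') (hF : Measurable F)
    (hF' : Measurable F')
    (hle : ∀ ω, S' ω ≤ S ω)
    (htot : ∀ ω, S ω + F ω = S' ω + F' ω) :
    ∀ x : ℝ, x ∈ Set.Icc (0:ℝ) 1 →
      (∫ ω, betaCDF (1 + S ω) (1 + F ω) x ∂P) ≤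
        ∫ ω, betaCDF (1 + S' ω) (1 + F' ω) x ∂P := by
  rintro x ⟨hx0, hx1⟩
  exact integral_mono (integrable_betaCDF_natCast P hS hF hx0 hx1)
    (integrable_betaCDF_natCast P hS' hF' hx0 hx1)
    fun ω => betaCDF_le_of_le (hle ω) (htot ω) hx0 hx1

/-- Coupling argument: replacing observed successes by pointwise fewer successes
(with the same total count) makes the Beta posterior mixture stochastically
smaller. -/
theorem beta_mixture_dominance {Ω : Type*} [MeasurableSpace Ω]
    (P : Measure Ω) [IsProbabilityMeasure P]
    (S S' F F' : Ω → ℕ)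
    (hS : Measurable S) (hS' : Measurable S') (hF : Measurable F)
    (hF' : Measurable F')
    (hle : ∀ ω, S' ω ≤ S ω) (hle' : ∀ ω, F ω ≤ F' ω)
    (htot : ∀ ω, S ω + F ω = S' ω + F' ω) :
    ∀ x : ℝ, x ∈ Set.Icc (0:ℝ) 1 →
      (∫ ω, betaCDF (1 + S ω) (1 + F ω) x ∂P) ≤
        ∫ ω, betaCDF (1 + S' ω) (1 + F' ω) x ∂P :=
  beta_mixture_dominance_general P S S' F F' hS hS' hF hF' hle htot
end
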